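/- Let $G$ be a cyclic group of order $8$ with generator $s$, let $\epsilon = s^4$, and let $H = \{1, \epsilon\}$. Let $k$ be a field of characteristic $\neq 2$ not containing a primitive 4th root of unity, let $A = k[X]/(X^4+1)$ (a field, assuming $X^4+1$ is irreducible over $k$), and let $i_A : G \to A^{\times}$ be the homomorphism sending $s$ to the class $x$ of $X$. Let $F^{\times 1} = \{u \in A^\times : u\sigma(u) = 1\}$ where $\sigma(x) = x^{-1}$, and let $V = \{(u, h) \in F^{\times 1} \times H : u^2 = i_A(h)\}$. Then $V = \{(1,1), (-1,1), (x^2, \epsilon), (-x^2, \epsilon)\}$ and $V$ is cyclic of order $4$; in particular the central extension $1 \to \{\pm 1\} \to V \to H \to 1$ does not split. -/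

import Mathlib

open Polynomial

/-!
The square of `u ∈ A` is `±1`, so `u` is a square root of `1` or of `-1 = x⁴`; in the field `A`
these are `±1` and `±x²`, and all four have `u σ(u) = 1` because `σ(x²) = x⁶ = x⁻²`. Hence `V` is
generated by `g = (x², ε)`, which has order 4 since `g² = (-1, 1)`. A section of `V → H` would send
`ε` to an element of order at most 2 whose first coordinate squares to `-1 ≠ 1`.
-/

theorem Multiplicative.eq_one_or_eq_ofAdd_one (h : Multiplicative (ZMod 2)) :
    h = 1 ∨ h = Multiplicative.ofAdd 1 := by
  revert h; decide

theorem Multiplicative.ofAdd_one_ne_one : Multiplicative.ofAdd (1 : ZMod 2) ≠ 1 := by decide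

section SquareRoots

variable {R : Type*} [CommRing R] [NoZeroDivisors R] {ζ : R}

theorem sq_eq_ite_iff (hζ : ζ ^ 2 = -1) (u : R) (h : Multiplicative (ZMod 2)) :
    u ^ 2 = (if h = 1 then 1 else -1) ↔
      ((u = 1 ∨ u = -1) ∧ h = 1) ∨ ((u = ζ ∨ u = -ζ) ∧ h = Multiplicative.ofAdd 1) := by
  rcases h.eq_one_or_eq_ofAdd_one with rfl | rfl
  · simp [Multiplicative.ofAdd_one_ne_one.symm]
  · simp [← hζ, sq_eq_sq_iff_eq_or_eq_neg]

theorem mul_map_self_eq_one_and_sq_eq_ite_iff {F : Type*} [FunLike F R R] [RingHomClass F R R]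
    {σ : F} (hζ : ζ ^ 2 = -1) (hσζ : ζ * σ ζ = 1) (u : R) (h : Multiplicative (ZMod 2)) :
    u * σ u = 1 ∧ u ^ 2 = (if h = 1 then 1 else -1) ↔
      ((u = 1 ∨ u = -1) ∧ h = 1) ∨ ((u = ζ ∨ u = -ζ) ∧ h = Multiplicative.ofAdd 1) := by
  rw [sq_eq_ite_iff hζ]
  refine ⟨And.right, fun hu => ⟨?_, hu⟩⟩
  rcases hu with ⟨rfl | rfl, -⟩ | ⟨rfl | rfl, -⟩ <;> simp [hσζ]

end SquareRoots

section Extension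

variable {R : Type*} [CommRing R] {ζ : Rˣ}

theorem mk_ofAdd_one_sq (hζ : (ζ : R) ^ 2 = -1) :
    (ζ, Multiplicative.ofAdd (1 : ZMod 2)) ^ 2 = (-1, 1) := by
  rw [Prod.pow_mk]
  exact Prod.ext (Units.ext (by simp [hζ]))
    (show Multiplicative.ofAdd (1 : ZMod 2) ^ 2 = 1 by decide)

theorem orderOf_mk_ofAdd_one (hζ : (ζ : R) ^ 2 = -1) (hR : (-1 : R) ≠ 1) :
    orderOf (ζ, Multiplicative.ofAdd (1 : ZMod 2)) = 4 := by
  have hsq := mk_ofAdd_one_sq hζ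
  refine orderOf_eq_prime_pow (p := 2) (n := 1) ?_ ?_
  · rw [pow_one, hsq]
    intro h
    exact hR (by simpa [Units.ext_iff] using congrArg Prod.fst h)
  · rw [pow_succ, pow_one, pow_mul, hsq]
    simp

theorem mem_zpowers_mk_ofAdd_one (hζ : (ζ : R) ^ 2 = -1) {p : Rˣ × Multiplicative (ZMod 2)}
    (hp : (((p.1 : R) = 1 ∨ (p.1 : R) = -1) ∧ p.2 = 1) ∨
      (((p.1 : R) = ζ ∨ (p.1 : R) = -ζ) ∧ p.2 = Multiplicative.ofAdd 1)) :
    p ∈ Subgroup.zpowers (ζ, Multiplicative.ofAdd (1 : ZMod 2)) := by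
  set g : Rˣ × Multiplicative (ZMod 2) := (ζ, Multiplicative.ofAdd 1)
  have hg2 : g ^ 2 = (-1, 1) := mk_ofAdd_one_sq hζ
  have hg3 : g ^ 3 = (-ζ, Multiplicative.ofAdd 1) := by
    rw [pow_succ, hg2]
    simp [g]
  suffices ∃ n : ℕ, g ^ n = p by
    obtain ⟨n, rfl⟩ := this
    exact Subgroup.npow_mem_zpowers g n
  obtain ⟨hp1 | hp1, hp2⟩ | ⟨hp1 | hp1, hp2⟩ := hp
  · refine ⟨0, ?_⟩
    ext <;> simp [hp1, hp2]
  · refine ⟨2, ?_⟩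
    rw [hg2]
    ext <;> simp [hp1, hp2]
  · refine ⟨1, ?_⟩
    ext <;> simp [g, hp1, hp2]
  · refine ⟨3, ?_⟩
    rw [hg3]
    ext <;> simp [hp1, hp2]

theorem not_exists_section_of_sq_eq_neg_one (hR : (-1 : R) ≠ 1)
    {W : Subgroup (Rˣ × Multiplicative (ZMod 2))}
    (hW : ∀ p ∈ W, p.2 ≠ 1 → (p.1 : R) ^ 2 = -1) :
    ¬ ∃ s : Multiplicative (ZMod 2) →* W, ∀ h : Multiplicative (ZMod 2),
        ((s h : W) : Rˣ × Multiplicative (ZMod 2)).2 = h := by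
  rintro ⟨s, hs⟩
  set w : Rˣ × Multiplicative (ZMod 2) := ↑(s (Multiplicative.ofAdd 1))
  have hw2 : w ^ 2 = 1 := by
    rw [← Subgroup.coe_pow, ← map_pow, show Multiplicative.ofAdd (1 : ZMod 2) ^ 2 = 1 by decide,
      map_one, Subgroup.coe_one]
  have hw : (w.1 : R) ^ 2 = -1 :=
    hW w (s _).2 (by rw [hs]; exact Multiplicative.ofAdd_one_ne_one)
  apply hR
  rw [← hw, ← Units.val_pow_eq_pow_val, ← Prod.pow_fst, hw2, Prod.fst_one, Units.val_one]

end Extension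

theorem AdjoinRoot.root_X_pow_four_add_one_pow_four {k : Type*} [CommRing k] :
    root (X ^ 4 + 1 : k[X]) ^ 4 = -1 := by
  have h := AdjoinRoot.eval₂_root (X ^ 4 + 1 : k[X])
  simp only [eval₂_add, eval₂_pow, eval₂_X, eval₂_one] at h
  linear_combination h

/-- For `G` cyclic of order 8 with `ε` its element of order 2 and `H = {1, ε}` (realized as
`ℤ/2ℤ` with `ε` the non-identity element), `A = k[X]/(X⁴+1)` a field with involution
`σ(x) = x⁻¹`, and `i_A(ε) = x⁴ = -1`, the group
`V = {(u,h) ∈ F^{×1} × H : u² = i_A(h)}` equals `{(1,1), (-1,1), (x²,ε), (-x²,ε)}`,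
is cyclic of order 4, and the central extension `1 → {±1} → V → H → 1` does not split. -/
theorem stmt18 {k : Type*} [Field k] (h2 : (2 : k) ≠ 0)
    (hirr : Irreducible (X ^ 4 + 1 : k[X]))
    (σ : AdjoinRoot (X ^ 4 + 1 : k[X]) →ₐ[k] AdjoinRoot (X ^ 4 + 1 : k[X]))
    (hσ : σ (AdjoinRoot.root (X ^ 4 + 1 : k[X])) =
      -(AdjoinRoot.root (X ^ 4 + 1 : k[X])) ^ 3)
    (W : Subgroup ((AdjoinRoot (X ^ 4 + 1 : k[X]))ˣ × Multiplicative (ZMod 2)))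
    (hW : ∀ p : (AdjoinRoot (X ^ 4 + 1 : k[X]))ˣ × Multiplicative (ZMod 2),
      p ∈ W ↔ ((p.1 : AdjoinRoot (X ^ 4 + 1 : k[X])) * σ (p.1 : AdjoinRoot (X ^ 4 + 1 : k[X])) = 1 ∧
        (p.1 : AdjoinRoot (X ^ 4 + 1 : k[X])) ^ 2 = (if p.2 = 1 then 1 else -1))) :
    (∀ p : (AdjoinRoot (X ^ 4 + 1 : k[X]))ˣ × Multiplicative (ZMod 2),
      p ∈ W ↔ (((p.1 : AdjoinRoot (X ^ 4 + 1 : k[X])) = 1 ∨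
                 (p.1 : AdjoinRoot (X ^ 4 + 1 : k[X])) = -1) ∧ p.2 = 1) ∨
        (((p.1 : AdjoinRoot (X ^ 4 + 1 : k[X])) = (AdjoinRoot.root (X ^ 4 + 1 : k[X])) ^ 2 ∨
          (p.1 : AdjoinRoot (X ^ 4 + 1 : k[X])) = -(AdjoinRoot.root (X ^ 4 + 1 : k[X])) ^ 2) ∧
          p.2 = Multiplicative.ofAdd (1 : ZMod 2))) ∧
    IsCyclic W ∧ Nat.card W = 4 ∧
    ¬ ∃ s : Multiplicative (ZMod 2) →* W, ∀ h : Multiplicative (ZMod 2),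
        ((s h : W) : (AdjoinRoot (X ^ 4 + 1 : k[X]))ˣ × Multiplicative (ZMod 2)).2 = h := by
  have : Fact (Irreducible (X ^ 4 + 1 : k[X])) := ⟨hirr⟩
  set r := AdjoinRoot.root (X ^ 4 + 1 : k[X])
  have hr4 : r ^ 4 = -1 := AdjoinRoot.root_X_pow_four_add_one_pow_four
  have hζ : (r ^ 2) ^ 2 = -1 := by rw [← pow_mul, hr4]
  have hσζ : r ^ 2 * σ (r ^ 2) = 1 := by
    rw [map_pow, hσ]
    linear_combination (r ^ 4 - 1) * hr4
  have hR : (-1 : AdjoinRoot (X ^ 4 + 1 : k[X])) ≠ 1 := by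
    have h2A := (map_ne_zero (algebraMap k (AdjoinRoot (X ^ 4 + 1 : k[X])))).2 h2
    rw [map_ofNat] at h2A
    exact fun h => h2A (by linear_combination -h)
  have mem_iff : ∀ p, p ∈ W ↔ _ := fun p =>
    (hW p).trans (mul_map_self_eq_one_and_sq_eq_ite_iff hζ hσζ _ _)
  set ζ : (AdjoinRoot (X ^ 4 + 1 : k[X]))ˣ :=
    ⟨r ^ 2, -r ^ 2, by linear_combination -hζ, by linear_combination -hζ⟩
  have hW_eq : W = Subgroup.zpowers (ζ, Multiplicative.ofAdd 1) :=
    le_antisymm (fun p hp => mem_zpowers_mk_ofAdd_one hζ ((mem_iff p).1 hp))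
      (Subgroup.zpowers_le.2 ((mem_iff _).2 (Or.inr ⟨Or.inl rfl, rfl⟩)))
  refine ⟨mem_iff, ?_, ?_, not_exists_section_of_sq_eq_neg_one hR fun p hp h => ?_⟩
  · rw [hW_eq]
    infer_instance
  · rw [hW_eq, Nat.card_zpowers, orderOf_mk_ofAdd_one hζ hR]
  · simpa [h] using ((hW p).1 hp).2
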